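/- arXiv:1908.05699 — 2 statements merged into one kernel-verified Lean document; each statement's English description precedes it below -/
import Mathlib

section
/- Let α, β₁, β₂ be real numbers and σ > 0. The quadratic polynomial (λ − 1)² + (α² + β₁ + β₂)σ²(λ − 1) + (α²σ² + β₁β₂σ⁴) is Schur stable if and only if |(β₁ + β₂ + α²)σ² − 2| < 1 + (1 − β₁σ²)(1 − β₂σ²) and (1 − β₁σ²)(1 − β₂σ²) < 1. (This polynomial is the characteristic polynomial of generalized Gauss–Seidel extra-gradient on a bilinear game, per singular value σ; hence Gauss–Seidel EG converges linearly iff these conditions hold for all singular values σ of E.) -/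
/-!
This is Jury's criterion for the monic quadratic `z² + b z + c` with `b = (α² + β₁ + β₂)σ² − 2`
and `c = (1 − β₁σ²)(1 − β₂σ²)`, obtained by expanding in `z` instead of `z − 1`.
A non-real root of a real quadratic has `|z|² = c`, while a real root `x` is trapped in `(−1, 1)`
by the signs of the polynomial at `±1`. Conversely, two real roots `r₁, r₂` in `(−1, 1)` make
`(1 ∓ r₁)(1 ∓ r₂) = 1 ± b + c` positive, and a conjugate pair gives `b² < 4c ≤ (1 + c)²`.
-/

lemma abs_lt_one_of_sq_add_mul_add_eq_zero {b c x : ℝ} (hb : |b| < 1 + c) (hc : c < 1)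
    (hx : x ^ 2 + b * x + c = 0) : |x| < 1 := by
  rw [abs_lt] at hb ⊢
  constructor
  · by_contra! hle
    nlinarith [mul_nonneg_of_nonpos_of_nonpos (by linarith : x + 1 ≤ 0)
      (by linarith : x - 1 - b ≤ 0)]
  · by_contra! hle
    nlinarith [mul_nonneg (by linarith : 0 ≤ x - 1) (by linarith : 0 ≤ x + 1 + b)]

lemma Complex.normSq_eq_of_sq_add_mul_add_eq_zero {b c : ℝ} {z : ℂ} (hnonreal : z.im ≠ 0)
    (hz : z ^ 2 + b * z + c = 0) : Complex.normSq z = c := by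
  have hre := congrArg Complex.re hz
  have him := congrArg Complex.im hz
  simp only [pow_two, Complex.add_re, Complex.mul_re, Complex.ofReal_re, Complex.ofReal_im,
    Complex.add_im, Complex.mul_im, Complex.zero_re, Complex.zero_im] at hre him
  have hre_eq : 2 * z.re + b = 0 :=
    (mul_eq_zero.mp (by linarith : z.im * (2 * z.re + b) = 0)).resolve_left hnonreal
  rw [Complex.normSq_apply]
  linear_combination -hre + z.re * hre_eq

lemma abs_add_lt_one_add_mul_of_abs_lt_one {r₁ r₂ : ℝ} (h₁ : |r₁| < 1) (h₂ : |r₂| < 1) :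
    |r₁ + r₂| < 1 + r₁ * r₂ ∧ r₁ * r₂ < 1 := by
  rw [abs_lt] at h₁ h₂
  refine ⟨abs_lt.mpr ⟨?_, ?_⟩, ?_⟩
  · nlinarith [mul_pos (by linarith : 0 < 1 + r₁) (by linarith : 0 < 1 + r₂)]
  · nlinarith [mul_pos (by linarith : 0 < 1 - r₁) (by linarith : 0 < 1 - r₂)]
  · nlinarith [mul_pos (by linarith : 0 < 1 - r₁) (by linarith : 0 < 1 + r₂)]

lemma abs_lt_one_add_of_sq_lt {b c : ℝ} (h : b ^ 2 < 4 * c) : |b| < 1 + c :=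
  abs_lt_of_sq_lt_sq (by nlinarith [sq_nonneg (1 - c)]) (by nlinarith [sq_nonneg b])

lemma schur_stable_of_jury {b c : ℝ} (hb : |b| < 1 + c) (hc : c < 1) (z : ℂ)
    (hz : z ^ 2 + b * z + c = 0) : ‖z‖ < 1 := by
  rcases eq_or_ne z.im 0 with hreal | hnonreal
  · have hz_eq : z = (z.re : ℂ) := Complex.ext rfl hreal
    rw [hz_eq] at hz ⊢
    rw [Complex.norm_real, Real.norm_eq_abs]
    exact abs_lt_one_of_sq_add_mul_add_eq_zero hb hc (by exact_mod_cast hz)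
  · have hsq : ‖z‖ ^ 2 = c := by
      rw [Complex.sq_norm, Complex.normSq_eq_of_sq_add_mul_add_eq_zero hnonreal hz]
    nlinarith [norm_nonneg z]

lemma jury_of_schur_stable {b c : ℝ} (h : ∀ z : ℂ, z ^ 2 + b * z + c = 0 → ‖z‖ < 1) :
    |b| < 1 + c ∧ c < 1 := by
  rcases le_or_gt 0 (b ^ 2 - 4 * c) with hdisc | hdisc
  · set s := √(b ^ 2 - 4 * c)
    have hs : s ^ 2 = b ^ 2 - 4 * c := Real.sq_sqrt hdisc
    have hroot : ∀ r : ℝ, r ^ 2 + b * r + c = 0 → |r| < 1 := fun r hr => by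
      simpa only [Complex.norm_real, Real.norm_eq_abs] using h r (by exact_mod_cast hr)
    have h₁ := hroot ((-b + s) / 2) (by nlinarith)
    have h₂ := hroot ((-b - s) / 2) (by nlinarith)
    have hsum : (-b + s) / 2 + (-b - s) / 2 = -b := by ring
    have hprod : (-b + s) / 2 * ((-b - s) / 2) = c := by nlinarith
    simpa only [hsum, hprod, abs_neg] using abs_add_lt_one_add_mul_of_abs_lt_one h₁ h₂
  · set s := √(4 * c - b ^ 2)
    have hs : s ^ 2 = 4 * c - b ^ 2 := Real.sq_sqrt (by linarith)
    set z : ℂ := ⟨-b / 2, s / 2⟩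
    have hz : z ^ 2 + b * z + c = 0 := by
      apply Complex.ext <;>
        simp only [z, pow_two, Complex.add_re, Complex.mul_re, Complex.ofReal_re,
          Complex.ofReal_im, Complex.add_im, Complex.mul_im, Complex.zero_re,
          Complex.zero_im] <;>
        nlinarith
    have hsq : ‖z‖ ^ 2 = c := by
      rw [Complex.sq_norm, Complex.normSq_apply]
      show -b / 2 * (-b / 2) + s / 2 * (s / 2) = c
      linear_combination hs / 4
    exact ⟨abs_lt_one_add_of_sq_lt (by linarith), by nlinarith [norm_nonneg z, h z hz]⟩

theorem schur_stable_quadratic_iff (b c : ℝ) :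
    (∀ z : ℂ, z ^ 2 + b * z + c = 0 → ‖z‖ < 1) ↔ |b| < 1 + c ∧ c < 1 :=
  ⟨jury_of_schur_stable, fun ⟨hb, hc⟩ => schur_stable_of_jury hb hc⟩

theorem gauss_seidel_eg_schur_general (α β₁ β₂ σ : ℝ) :
    (∀ z : ℂ, (z - 1) ^ 2 + (((α ^ 2 + β₁ + β₂) * σ ^ 2 : ℝ) : ℂ) * (z - 1) +
          ((α ^ 2 * σ ^ 2 + β₁ * β₂ * σ ^ 4 : ℝ) : ℂ) = 0 → ‖z‖ < 1) ↔
      (|(β₁ + β₂ + α ^ 2) * σ ^ 2 - 2| < 1 + (1 - β₁ * σ ^ 2) * (1 - β₂ * σ ^ 2) ∧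
        (1 - β₁ * σ ^ 2) * (1 - β₂ * σ ^ 2) < 1) := by
  rw [← schur_stable_quadratic_iff]
  refine forall_congr' fun z => ?_
  have hexpand : (z - 1) ^ 2 + (((α ^ 2 + β₁ + β₂) * σ ^ 2 : ℝ) : ℂ) * (z - 1) +
      ((α ^ 2 * σ ^ 2 + β₁ * β₂ * σ ^ 4 : ℝ) : ℂ) =
      z ^ 2 + (((β₁ + β₂ + α ^ 2) * σ ^ 2 - 2 : ℝ) : ℂ) * z +
        (((1 - β₁ * σ ^ 2) * (1 - β₂ * σ ^ 2) : ℝ) : ℂ) := by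
    push_cast
    ring
  rw [hexpand]

/-- Gauss–Seidel extra-gradient on a bilinear game: the characteristic polynomial
`(λ − 1)² + (α² + β₁ + β₂)σ²(λ − 1) + (α²σ² + β₁β₂σ⁴)` is Schur stable iff
`|(β₁ + β₂ + α²)σ² − 2| < 1 + (1 − β₁σ²)(1 − β₂σ²)` and
`(1 − β₁σ²)(1 − β₂σ²) < 1`. -/
theorem gauss_seidel_eg_schur (α β₁ β₂ σ : ℝ) (hσ : 0 < σ) :
    (∀ z : ℂ, (z - 1) ^ 2 + (((α ^ 2 + β₁ + β₂) * σ ^ 2 : ℝ) : ℂ) * (z - 1) +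
          ((α ^ 2 * σ ^ 2 + β₁ * β₂ * σ ^ 4 : ℝ) : ℂ) = 0 → ‖z‖ < 1) ↔
      (|(β₁ + β₂ + α ^ 2) * σ ^ 2 - 2| < 1 + (1 - β₁ * σ ^ 2) * (1 - β₂ * σ ^ 2) ∧
        (1 - β₁ * σ ^ 2) * (1 - β₂ * σ ^ 2) < 1) :=
  gauss_seidel_eg_schur_general α β₁ β₂ σ
end

section
/- Let α > 0, β₁, β₂ be real numbers and σ > 0. The quartic polynomial λ²(λ − 1)² + (αλ − β₁)(αλ − β₂)σ² is Schur stable if and only if all of the following hold: |β₁β₂|σ² < 1, (α − β₁)(α − β₂) > 0, 4 + (α + β₁)(α + β₂)σ² > 0, and α²(β₁²σ² + 1)(β₂²σ² + 1) < (β₁β₂σ² + 1)(2α(β₁ + β₂) + β₁β₂(β₁β₂σ² − 3)). (This polynomial is the characteristic polynomial of generalized Jacobi optimistic gradient descent on a bilinear game, per singular value σ; hence Jacobi OGD converges linearly iff these conditions hold for all singular values σ of E.) -/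
/-!
Over `ℝ` the quartic `z⁴ - 2z³ + (1 + α²σ²)z² - α(β₁ + β₂)σ²z + β₁β₂σ²` factors as
`(z² + pz + q)(z² + rz + s)` with `p + r = -2`, and a real monic quadratic `z² + az + b` is Schur
stable iff `b < 1` and `1 ± a + b > 0`. Up to the factor `σ² > 0`, the four conditions of the
theorem say `|qs| < 1`, `f(1) > 0`, `f(-1) > 0` and `∏ᵢ<ⱼ (1 - wᵢwⱼ) > 0` for the quartic `f` and
its roots `wᵢ`. Stability of both factors gives these at once. Conversely, suppose `f(±1) > 0` and
`|qs| < 1` but a factor is unstable. Comparing the signs of the two factors at `±1` leaves two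
configurations: each factor has exactly one root above `1`, or one factor has constant term
above `1` while the other is stable. With the root sum `w₁ + w₂ + w₃ + w₄ = 2`, both force
`∏ᵢ<ⱼ (1 - wᵢwⱼ) ≤ 0`.
-/

open Polynomial ComplexConjugate

theorem exists_quadratic_factors (a b c d : ℝ) :
    ∃ p q r s : ℝ, p + r = a ∧ q + s + p * r = b ∧ p * s + q * r = c ∧ q * s = d := by
  have hf : IsMonicOfDegree (X ^ 4 + C a * X ^ 3 + C b * X ^ 2 + C c * X + C d : ℝ[X]) 4 :=
    ⟨by compute_degree!, by monicity!⟩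
  obtain ⟨f₁, f₂, h₁, h₂, hf⟩ := hf.eq_isMonicOfDegree_two_mul_isMonicOfDegree (n := 2)
  obtain ⟨p, q, rfl⟩ := isMonicOfDegree_two_iff.mp h₁
  obtain ⟨r, s, rfl⟩ := isMonicOfDegree_two_iff.mp h₂
  have hprod : (X ^ 2 + C p * X + C q) * (X ^ 2 + C r * X + C s) =
      X ^ 4 + C (p + r) * X ^ 3 + C (q + s + p * r) * X ^ 2 + C (p * s + q * r) * X +
        C (q * s) := by
    simp only [map_add, map_mul]; ring
  rw [hprod] at hf
  have hcoeff (n : ℕ) := congrArg (coeff · n) hf.symm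
  simp only [coeff_add, coeff_C_mul_X_pow, coeff_C_mul_X, coeff_X_pow, coeff_C] at hcoeff
  exact ⟨p, q, r, s, by simpa using hcoeff 3, by simpa using hcoeff 2, by simpa using hcoeff 1,
    by simpa using hcoeff 0⟩

theorem exists_vieta_of_discrim_nonneg {p q : ℝ} (hd : 0 ≤ p ^ 2 - 4 * q) :
    ∃ x y : ℝ, y ≤ x ∧ p = -(x + y) ∧ q = x * y := by
  have ht := Real.sq_sqrt hd
  refine ⟨(-p + √(p ^ 2 - 4 * q)) / 2, (-p - √(p ^ 2 - 4 * q)) / 2, ?_, by ring, ?_⟩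
  · linarith [Real.sqrt_nonneg (p ^ 2 - 4 * q)]
  · linear_combination (1 / 4 : ℝ) * ht

theorem abs_lt_one_and_abs_lt_one_iff (x y : ℝ) :
    |x| < 1 ∧ |y| < 1 ↔ x * y < 1 ∧ 0 < (1 - x) * (1 - y) ∧ 0 < (1 + x) * (1 + y) := by
  simp only [abs_lt]
  constructor
  · rintro ⟨⟨hx₁, hx₂⟩, hy₁, hy₂⟩
    exact ⟨by nlinarith, by nlinarith, by nlinarith⟩
  · rintro ⟨h, h₁, h₂⟩
    rcases mul_pos_iff.mp h₁ with h₁ | h₁ <;> rcases mul_pos_iff.mp h₂ with h₂ | h₂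
    · exact ⟨⟨by linarith, by linarith⟩, by linarith, by linarith⟩
    all_goals nlinarith

theorem mul_lt_one_of_add_eq_two {x x' y y' : ℝ} (hx : 1 < x) (hx' : 1 < x') (hy : y < 1)
    (hy' : -1 < y') (h : x + x' + y + y' = 2) : x * y < 1 := by
  rcases le_or_gt y 0 with hy₀ | hy₀
  · nlinarith
  · nlinarith [sq_nonneg (1 - y)]

theorem one_add_mul_add_mul_sq_pos {r s x : ℝ} (hs : s < 1) (hv : 0 < 1 + r + s)
    (hn : 0 < 1 - r + s) (hx : |x| < 1) : 0 < 1 + r * x + s * x ^ 2 := by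
  obtain ⟨hx₁, hx₂⟩ := abs_lt.mp hx
  have hsx₁ : -1 < s * x := by nlinarith
  have hsx₂ : s * x < 1 := by nlinarith
  rcases le_or_gt 0 x with hx₀ | hx₀
  · have h : 1 + r * x + s * x ^ 2 = (1 - x) * (1 - s * x) + x * (1 + r + s) := by ring
    rw [h]
    exact add_pos_of_pos_of_nonneg (mul_pos (by linarith) (by linarith)) (mul_nonneg hx₀ hv.le)
  · have h : 1 + r * x + s * x ^ 2 = (1 + x) * (1 + s * x) + -x * (1 - r + s) := by ring
    rw [h]
    exact add_pos (mul_pos (by linarith) (by linarith)) (mul_pos (by linarith) hn)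

def SchurStable (f : ℂ → ℂ) : Prop := ∀ z, f z = 0 → ‖z‖ < 1

theorem schurStable_mul_iff {f g : ℂ → ℂ} :
    SchurStable (fun z => f z * g z) ↔ SchurStable f ∧ SchurStable g := by
  refine ⟨fun h => ⟨fun z hz => h z (by simp [hz]), fun z hz => h z (by simp [hz])⟩, ?_⟩
  rintro ⟨hf, hg⟩ z hz
  rcases mul_eq_zero.mp hz with h | h
  exacts [hf z h, hg z h]

theorem schurStable_sub_iff (w : ℂ) : SchurStable (fun z => z - w) ↔ ‖w‖ < 1 :=
  ⟨fun h => h w (sub_self w), fun h _ hz => sub_eq_zero.mp hz ▸ h⟩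

theorem schurStable_quadratic_iff (a b : ℝ) :
    SchurStable (fun z : ℂ => z ^ 2 + a * z + b) ↔ b < 1 ∧ 0 < 1 + a + b ∧ 0 < 1 - a + b := by
  rcases le_or_gt 0 (a ^ 2 - 4 * b) with hd | hd
  · obtain ⟨x, y, -, rfl, rfl⟩ := exists_vieta_of_discrim_nonneg hd
    have hfac : (fun z : ℂ => z ^ 2 + ((-(x + y) : ℝ) : ℂ) * z + ((x * y : ℝ) : ℂ)) =
        fun z => (z - (x : ℂ)) * (z - (y : ℂ)) := by
      funext z; push_cast; ring
    rw [hfac, schurStable_mul_iff, schurStable_sub_iff, schurStable_sub_iff, Complex.norm_real,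
      Complex.norm_real, Real.norm_eq_abs, Real.norm_eq_abs, abs_lt_one_and_abs_lt_one_iff]
    constructor <;> rintro ⟨h, h₁, h₂⟩ <;> exact ⟨h, by linarith, by linarith⟩
  · have ht := Real.sq_sqrt (by linarith : 0 ≤ 4 * b - a ^ 2)
    set w : ℂ := ⟨-a / 2, √(4 * b - a ^ 2) / 2⟩
    have hnormSq : Complex.normSq w = b := by
      rw [Complex.normSq_mk]; linear_combination (1 / 4 : ℝ) * ht
    have hfac : (fun z : ℂ => z ^ 2 + a * z + b) = fun z => (z - w) * (z - conj w) := by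
      funext z
      have hsum : w + conj w = -a := by rw [Complex.add_conj]; push_cast [w]; ring
      have hprod : w * conj w = b := by rw [Complex.mul_conj, hnormSq]
      linear_combination z * hsum - hprod
    rw [hfac, schurStable_mul_iff, schurStable_sub_iff, schurStable_sub_iff, Complex.norm_conj,
      and_self, ← sq_lt_one_iff₀ (norm_nonneg w), Complex.sq_norm, hnormSq]
    constructor
    · intro hb
      exact ⟨hb, by nlinarith [sq_nonneg (a + 2)], by nlinarith [sq_nonneg (a - 2)]⟩
    · exact fun h => h.1

/-- `∏ᵢⱼ (1 - xᵢ yⱼ)` over the roots `xᵢ` of `z² + pz + q` and `yⱼ` of `z² + rz + s`, i.e. the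
resultant of `z² + pz + q` and the reversed polynomial `sz² + rz + 1`. -/
def rootCrossProduct (p q r s : ℝ) : ℝ := (1 - q * s) ^ 2 - (r - s * p) * (p - q * r)

/-- `∏ᵢ<ⱼ (1 - wᵢ wⱼ)` over the four roots `wᵢ` of `(z² + pz + q)(z² + rz + s)`. -/
def rootPairProduct (p q r s : ℝ) : ℝ := (1 - q) * (1 - s) * rootCrossProduct p q r s

theorem rootPairProduct_comm (p q r s : ℝ) :
    rootPairProduct p q r s = rootPairProduct r s p q := by
  unfold rootPairProduct rootCrossProduct; ring

theorem rootCrossProduct_of_vieta (x y r s : ℝ) :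
    rootCrossProduct (-(x + y)) (x * y) r s =
      (1 + r * x + s * x ^ 2) * (1 + r * y + s * y ^ 2) := by
  unfold rootCrossProduct; ring

theorem four_mul_rootCrossProduct (p q r s : ℝ) :
    4 * rootCrossProduct p q r s =
      (s * (p ^ 2 - 2 * q) - r * p + 2) ^ 2 + (4 * q - p ^ 2) * (r - s * p) ^ 2 := by
  unfold rootCrossProduct; ring

theorem rootCrossProduct_nonneg_of_discrim_neg {p q r s : ℝ} (hd : p ^ 2 < 4 * q) :
    0 ≤ rootCrossProduct p q r s := by
  nlinarith [four_mul_rootCrossProduct p q r s, sq_nonneg (s * (p ^ 2 - 2 * q) - r * p + 2),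
    mul_nonneg (sub_nonneg.mpr hd.le) (sq_nonneg (r - s * p))]

theorem rootCrossProduct_pos_of_discrim_neg {p q r s : ℝ} (hd : p ^ 2 < 4 * q) (hqs : q * s < 1) :
    0 < rootCrossProduct p q r s := by
  have h4 := four_mul_rootCrossProduct p q r s
  rcases eq_or_ne r (s * p) with hr | hr
  · subst hr
    nlinarith
  · nlinarith [sq_nonneg (s * (p ^ 2 - 2 * q) - r * p + 2),
      mul_pos (sub_pos.mpr hd) (sq_pos_of_ne_zero (sub_ne_zero.mpr hr))]

theorem rootCrossProduct_pos {p q r s : ℝ} (hq : q < 1) (hu : 0 < 1 + p + q)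
    (hm : 0 < 1 - p + q) (hs : s < 1) (hv : 0 < 1 + r + s) (hn : 0 < 1 - r + s) :
    0 < rootCrossProduct p q r s := by
  rcases lt_or_ge (p ^ 2) (4 * q) with hd | hd
  · exact rootCrossProduct_pos_of_discrim_neg hd (by nlinarith)
  · obtain ⟨x, y, -, rfl, rfl⟩ := exists_vieta_of_discrim_nonneg (sub_nonneg.mpr hd)
    obtain ⟨hx, hy⟩ := (abs_lt_one_and_abs_lt_one_iff x y).mpr ⟨hq, by linarith, by linarith⟩
    rw [rootCrossProduct_of_vieta]
    exact mul_pos (one_add_mul_add_mul_sq_pos hs hv hn hx) (one_add_mul_add_mul_sq_pos hs hv hn hy)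

theorem rootCrossProduct_pos_of_one_lt {x y r s : ℝ} (hx : 1 < x) (hy : 1 < y) (hs : s < 1)
    (hv : 0 < 1 + r + s) (hn : 0 < 1 - r + s) (hr : r = x + y - 2) :
    0 < rootCrossProduct (-(x + y)) (x * y) r s := by
  rw [rootCrossProduct_of_vieta]
  rcases lt_or_ge (r ^ 2) (4 * s) with hd | hd
  · have hs₀ : 0 < s := by nlinarith [sq_nonneg r]
    have hpos (t : ℝ) : 0 < 1 + r * t + s * t ^ 2 := by nlinarith [sq_nonneg (2 * s * t + r)]
    exact mul_pos (hpos x) (hpos y)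
  · obtain ⟨u, v, -, rfl, rfl⟩ := exists_vieta_of_discrim_nonneg (sub_nonneg.mpr hd)
    obtain ⟨hu, hv⟩ := (abs_lt_one_and_abs_lt_one_iff u v).mpr ⟨hs, by linarith, by linarith⟩
    obtain ⟨hu₁, hu₂⟩ := abs_lt.mp hu
    obtain ⟨hv₁, hv₂⟩ := abs_lt.mp hv
    have hxu := mul_lt_one_of_add_eq_two hx hy hu₂ hv₁ (by linarith)
    have hxv := mul_lt_one_of_add_eq_two hx hy hv₂ hu₁ (by linarith)
    have hyu := mul_lt_one_of_add_eq_two hy hx hu₂ hv₁ (by linarith)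
    have hyv := mul_lt_one_of_add_eq_two hy hx hv₂ hu₁ (by linarith)
    have h (t : ℝ) : 1 + -(u + v) * t + u * v * t ^ 2 = (1 - t * u) * (1 - t * v) := by ring
    rw [h, h]
    apply_rules [mul_pos, sub_pos_of_lt]

theorem lt_one_of_rootPairProduct_pos {p q r s : ℝ} (hpr : p + r = -2) (hqs : |q * s| < 1)
    (hu : 0 < 1 + p + q) (hm : 0 < 1 - p + q) (hv : 0 < 1 + r + s) (hn : 0 < 1 - r + s)
    (hE : 0 < rootPairProduct p q r s) : q < 1 := by
  by_contra! hq
  unfold rootPairProduct at hE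
  obtain ⟨hqs₁, hqs₂⟩ := abs_lt.mp hqs
  have hs : s < 1 := by nlinarith
  have hq₁ : 1 < q := hq.lt_of_ne (by rintro rfl; simp at hE)
  have hK : rootCrossProduct p q r s < 0 :=
    neg_of_mul_pos_right hE (mul_neg_of_neg_of_pos (by linarith) (by linarith)).le
  rcases lt_or_ge (p ^ 2) (4 * q) with hd | hd
  · exact hK.not_ge (rootCrossProduct_nonneg_of_discrim_neg hd)
  · obtain ⟨x, y, hyx, rfl, rfl⟩ := exists_vieta_of_discrim_nonneg (sub_nonneg.mpr hd)
    by_cases hy : 1 < y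
    · exact hK.not_gt (rootCrossProduct_pos_of_one_lt (hy.trans_le hyx) hy hs hv hn (by linarith))
    · have hy₁ : y < 1 := (not_lt.mp hy).lt_of_ne (by rintro rfl; linarith)
      have hx₁ : x < 1 := by nlinarith
      have hx₀ : x < -1 := by nlinarith
      linarith

theorem rootPairProduct_neg {p q r s : ℝ} (hpr : p + r = -2) (hu : 1 + p + q < 0)
    (hm : 0 < 1 - p + q) (hv : 1 + r + s < 0) (hn : 0 < 1 - r + s) :
    rootPairProduct p q r s < 0 := by
  obtain ⟨x₁, x₂, hx, rfl, rfl⟩ :=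
    exists_vieta_of_discrim_nonneg (by linarith [sq_nonneg (p + 2)] : 0 ≤ p ^ 2 - 4 * q)
  obtain ⟨y₁, y₂, hy, rfl, rfl⟩ :=
    exists_vieta_of_discrim_nonneg (by linarith [sq_nonneg (r + 2)] : 0 ≤ r ^ 2 - 4 * s)
  have hx₁ : 1 < x₁ := by nlinarith
  have hx₂ : x₂ < 1 := by nlinarith
  have hx₂' : -1 < x₂ := by nlinarith
  have hy₁ : 1 < y₁ := by nlinarith
  have hy₂ : y₂ < 1 := by nlinarith
  have hy₂' : -1 < y₂ := by nlinarith
  have h₁ := mul_lt_one_of_add_eq_two hx₁ hy₁ hx₂ hy₂' (by linarith)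
  have h₂ := mul_lt_one_of_add_eq_two hy₁ hx₁ hy₂ hx₂' (by linarith)
  have h₃ := mul_lt_one_of_add_eq_two hx₁ hy₁ hy₂ hx₂' (by linarith)
  have h₄ := mul_lt_one_of_add_eq_two hy₁ hx₁ hx₂ hy₂' (by linarith)
  have h₅ : x₂ * y₂ < 1 := by nlinarith
  have h : rootPairProduct (-(x₁ + x₂)) (x₁ * x₂) (-(y₁ + y₂)) (y₁ * y₂) = (1 - x₁ * y₁) *
      ((1 - x₁ * x₂) * (1 - y₁ * y₂) * (1 - x₁ * y₂) * (1 - y₁ * x₂) * (1 - x₂ * y₂)) := by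
    unfold rootPairProduct rootCrossProduct; ring
  rw [h]
  refine mul_neg_of_neg_of_pos (by nlinarith) ?_
  apply_rules [mul_pos, sub_pos_of_lt]

theorem quadratic_conditions_iff_quartic_conditions {p q r s : ℝ} (hpr : p + r = -2) :
    (q < 1 ∧ 0 < 1 + p + q ∧ 0 < 1 - p + q) ∧ (s < 1 ∧ 0 < 1 + r + s ∧ 0 < 1 - r + s) ↔
      |q * s| < 1 ∧ 0 < (1 + p + q) * (1 + r + s) ∧ 0 < (1 - p + q) * (1 - r + s) ∧
        0 < rootPairProduct p q r s := by
  constructor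
  · rintro ⟨⟨hq, hu, hm⟩, hs, hv, hn⟩
    refine ⟨abs_lt.mpr ⟨by nlinarith, by nlinarith⟩, mul_pos hu hv, mul_pos hm hn, ?_⟩
    exact mul_pos (mul_pos (by linarith) (by linarith)) (rootCrossProduct_pos hq hu hm hs hv hn)
  · rintro ⟨hqs, h₁, hneg, hE⟩
    rcases mul_pos_iff.mp h₁ with ⟨hu, hv⟩ | ⟨hu, hv⟩ <;>
      rcases mul_pos_iff.mp hneg with ⟨hm, hn⟩ | ⟨hm, hn⟩
    · have hq := lt_one_of_rootPairProduct_pos hpr hqs hu hm hv hn hE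
      have hs := lt_one_of_rootPairProduct_pos (by linarith) (by rwa [mul_comm]) hv hn hu hm
        (by rwa [← rootPairProduct_comm])
      exact ⟨⟨hq, hu, hm⟩, hs, hv, hn⟩
    · -- `(1 + p + q) - (1 - p + q) = 2p`, so here `p > 0` and likewise `r > 0`
      linarith
    · exact absurd hE (rootPairProduct_neg hpr hu hm hv hn).not_gt
    · -- adding the two sign conditions gives `q < -1` and `s < -1`
      nlinarith [abs_lt.mp hqs]

theorem schurStable_quartic_iff (b c d : ℝ) :
    SchurStable (fun z : ℂ => z ^ 4 - 2 * z ^ 3 + b * z ^ 2 + c * z + d) ↔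
      |d| < 1 ∧ 0 < b + c + d - 1 ∧ 0 < 3 + b - c + d ∧
        0 < (d + 1) * (d ^ 2 - 3 * d - 2 * c) - c ^ 2 - (b - 1) * (d - 1) ^ 2 := by
  obtain ⟨p, q, r, s, hpr, rfl, rfl, rfl⟩ := exists_quadratic_factors (-2) b c d
  obtain rfl : r = -2 - p := by linarith
  have hfac : (fun z : ℂ => z ^ 4 - 2 * z ^ 3 + ((q + s + p * (-2 - p) : ℝ) : ℂ) * z ^ 2 +
      ((p * s + q * (-2 - p) : ℝ) : ℂ) * z + ((q * s : ℝ) : ℂ)) =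
      fun z => (z ^ 2 + p * z + q) * (z ^ 2 + ((-2 - p : ℝ) : ℂ) * z + s) := by
    funext z; push_cast; ring
  rw [hfac, schurStable_mul_iff, schurStable_quadratic_iff, schurStable_quadratic_iff,
    quadratic_conditions_iff_quartic_conditions hpr]
  unfold rootPairProduct rootCrossProduct
  ring_nf

theorem jacobi_ogd_schur_general (α β₁ β₂ σ : ℝ) (hσ : 0 < σ) :
    (∀ z : ℂ, z ^ 2 * (z - 1) ^ 2 +
          ((α : ℂ) * z - (β₁ : ℂ)) * ((α : ℂ) * z - (β₂ : ℂ)) * (σ : ℂ) ^ 2 = 0 →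
        ‖z‖ < 1) ↔
      (|β₁ * β₂| * σ ^ 2 < 1 ∧
        (α - β₁) * (α - β₂) > 0 ∧
        4 + (α + β₁) * (α + β₂) * σ ^ 2 > 0 ∧
        α ^ 2 * (β₁ ^ 2 * σ ^ 2 + 1) * (β₂ ^ 2 * σ ^ 2 + 1) <
          (β₁ * β₂ * σ ^ 2 + 1) *
            (2 * α * (β₁ + β₂) + β₁ * β₂ * (β₁ * β₂ * σ ^ 2 - 3))) := by
  have hσ2 : 0 < σ ^ 2 := by positivity
  have hquartic : (fun z : ℂ => z ^ 2 * (z - 1) ^ 2 + (α * z - β₁) * (α * z - β₂) * σ ^ 2) =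
      fun z => z ^ 4 - 2 * z ^ 3 + ((1 + α ^ 2 * σ ^ 2 : ℝ) : ℂ) * z ^ 2 +
        ((-(α * (β₁ + β₂) * σ ^ 2) : ℝ) : ℂ) * z + ((β₁ * β₂ * σ ^ 2 : ℝ) : ℂ) := by
    funext z; push_cast; ring
  refine (congrArg SchurStable hquartic).to_iff.trans ((schurStable_quartic_iff _ _ _).trans ?_)
  refine and_congr ?_ (and_congr ?_ (and_congr ?_ ?_))
  · rw [abs_mul, abs_of_pos hσ2]
  · rw [gt_iff_lt, ← mul_pos_iff_of_pos_left hσ2 (b := (α - β₁) * (α - β₂))]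
    ring_nf
  · rw [gt_iff_lt]
    ring_nf
  · rw [← sub_pos (b := α ^ 2 * _ * _), ← mul_pos_iff_of_pos_left hσ2 (b := _ - α ^ 2 * _ * _)]
    ring_nf

/-- Jacobi optimistic gradient descent on a bilinear game: the characteristic
polynomial `λ²(λ − 1)² + (αλ − β₁)(αλ − β₂)σ²` is Schur stable iff
`|β₁β₂|σ² < 1`, `(α − β₁)(α − β₂) > 0`, `4 + (α + β₁)(α + β₂)σ² > 0`, and
`α²(β₁²σ² + 1)(β₂²σ² + 1) < (β₁β₂σ² + 1)(2α(β₁ + β₂) + β₁β₂(β₁β₂σ² − 3))`. -/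
theorem jacobi_ogd_schur (α β₁ β₂ σ : ℝ) (hα : 0 < α) (hσ : 0 < σ) :
    (∀ z : ℂ, z ^ 2 * (z - 1) ^ 2 +
          ((α : ℂ) * z - (β₁ : ℂ)) * ((α : ℂ) * z - (β₂ : ℂ)) * (σ : ℂ) ^ 2 = 0 →
        ‖z‖ < 1) ↔
      (|β₁ * β₂| * σ ^ 2 < 1 ∧
        (α - β₁) * (α - β₂) > 0 ∧
        4 + (α + β₁) * (α + β₂) * σ ^ 2 > 0 ∧
        α ^ 2 * (β₁ ^ 2 * σ ^ 2 + 1) * (β₂ ^ 2 * σ ^ 2 + 1) <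
          (β₁ * β₂ * σ ^ 2 + 1) *
            (2 * α * (β₁ + β₂) + β₁ * β₂ * (β₁ * β₂ * σ ^ 2 - 3))) :=
  jacobi_ogd_schur_general α β₁ β₂ σ hσ
end
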